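/- (The conservative rank envelope test rejects only if the rank count test rejects.) It holds that #{i ∈ {1, …, s+1} : N_i ≼ N_1} ≤ #{i ∈ {1, …, s+1} : R_i ≤ R_1}, where N_i ≼ N_1 means ¬(N_1 ≺ N_i). Consequently, for any integer m, if #{i : R_i ≤ R_1} ≤ m (the conservative rank envelope test at level m/(s+1) rejects) then #{i : N_i ≼ N_1} ≤ m (the rank count test rejects). -/

import Mathlib

open Finset

/-- The upward pointwise rank `R_i^↑(r) = #{j : T_j(r) ≤ T_i(r)}`. -/
noncomputable def upRank {s : ℕ} {ι : Type*} (T : Fin (s + 1) → ι → ℝ) (i : Fin (s + 1)) (r : ι) : ℕ :=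
  {j : Fin (s + 1) | T j r ≤ T i r}.ncard

/-- The downward pointwise rank `R_i^↓(r) = #{j : T_j(r) ≥ T_i(r)}`. -/
noncomputable def downRank {s : ℕ} {ι : Type*} (T : Fin (s + 1) → ι → ℝ) (i : Fin (s + 1)) (r : ι) : ℕ :=
  {j : Fin (s + 1) | T i r ≤ T j r}.ncard

/-- The two-sided pointwise rank `R_i^*(r) = min(R_i^↑(r), R_i^↓(r))`. -/
noncomputable def twoSidedRank {s : ℕ} {ι : Type*} (T : Fin (s + 1) → ι → ℝ) (i : Fin (s + 1)) (r : ι) : ℕ :=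
  min (upRank T i r) (downRank T i r)

/-- The extreme rank `R_i = min_{r ∈ I} R_i^*(r)`. -/
noncomputable def extremeRank {s : ℕ} {ι : Type*} [Fintype ι] [Nonempty ι]
    (T : Fin (s + 1) → ι → ℝ) (i : Fin (s + 1)) : ℕ :=
  univ.inf' univ_nonempty (fun r => twoSidedRank T i r)

/-- The rank count `N_{i,k} = #{r ∈ I : R_i^*(r) = k}`. -/
noncomputable def rankCount {s : ℕ} {ι : Type*} [Fintype ι]
    (T : Fin (s + 1) → ι → ℝ) (i : Fin (s + 1)) (k : ℕ) : ℕ :=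
  {r : ι | twoSidedRank T i r = k}.ncard

/-- The reverse lexical strict order on rank count vectors
`N_i = (N_{i,1}, …, N_{i,K})`, `K = ⌊(s+2)/2⌋`: `N_i ≺ N_j` iff there exists `n ≤ K`
with `N_{i,k} = N_{j,k}` for all `k < n` and `N_{i,n} > N_{j,n}`. -/
def rankCountLT {s : ℕ} {ι : Type*} [Fintype ι]
    (T : Fin (s + 1) → ι → ℝ) (i j : Fin (s + 1)) : Prop :=
  ∃ n : ℕ, 1 ≤ n ∧ n ≤ (s + 2) / 2 ∧
    (∀ k, 1 ≤ k → k < n → rankCount T i k = rankCount T j k) ∧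
    rankCount T j n < rankCount T i n

section Ranks

variable {s : ℕ} {ι : Type*} (T : Fin (s + 1) → ι → ℝ)

lemma one_le_twoSidedRank (i : Fin (s + 1)) (r : ι) : 1 ≤ twoSidedRank T i r := by
  have hup : 0 < upRank T i r := (Set.ncard_pos (Set.toFinite _)).2 ⟨i, le_refl (T i r)⟩
  have hdown : 0 < downRank T i r := (Set.ncard_pos (Set.toFinite _)).2 ⟨i, le_refl (T i r)⟩
  exact le_min hup hdown

/-- Without ties at `r`, the curve `i` is the only one counted by both ranks. -/
lemma upRank_add_downRank {r : ι} (hr : Function.Injective (T · r)) (i : Fin (s + 1)) :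
    upRank T i r + downRank T i r = s + 2 := by
  have hunion : {j | T j r ≤ T i r} ∪ {j | T i r ≤ T j r} = Set.univ :=
    Set.eq_univ_of_forall fun j => le_total (T j r) (T i r)
  have hinter : {j | T j r ≤ T i r} ∩ {j | T i r ≤ T j r} = {i} := by
    ext j
    exact ⟨fun ⟨hle, hge⟩ => hr (le_antisymm hle hge),
      fun hj => by simp [Set.mem_singleton_iff.1 hj]⟩
  have h := Set.ncard_union_add_ncard_inter {j | T j r ≤ T i r} {j | T i r ≤ T j r}
  rw [hunion, hinter, Set.ncard_univ, Set.ncard_singleton, Nat.card_eq_fintype_card,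
    Fintype.card_fin] at h
  exact h.symm

lemma twoSidedRank_le_half {r : ι} (hr : Function.Injective (T · r)) (i : Fin (s + 1)) :
    twoSidedRank T i r ≤ (s + 2) / 2 := by
  have h := upRank_add_downRank T hr i
  rw [Nat.le_div_iff_mul_le two_pos, twoSidedRank]
  omega

variable [Fintype ι] [Nonempty ι]

lemma extremeRank_le_twoSidedRank (i : Fin (s + 1)) (r : ι) :
    extremeRank T i ≤ twoSidedRank T i r :=
  inf'_le _ (mem_univ r)

lemma exists_twoSidedRank_eq_extremeRank (i : Fin (s + 1)) :
    ∃ r, twoSidedRank T i r = extremeRank T i :=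
  (exists_mem_eq_inf' univ_nonempty _).imp fun _ h => h.2.symm

lemma one_le_extremeRank (i : Fin (s + 1)) : 1 ≤ extremeRank T i := by
  obtain ⟨r, hr⟩ := exists_twoSidedRank_eq_extremeRank T i
  exact hr ▸ one_le_twoSidedRank T i r

lemma extremeRank_le_half {r : ι} (hr : Function.Injective (T · r)) (i : Fin (s + 1)) :
    extremeRank T i ≤ (s + 2) / 2 :=
  (extremeRank_le_twoSidedRank T i r).trans (twoSidedRank_le_half T hr i)

lemma rankCount_eq_zero_of_lt_extremeRank {i : Fin (s + 1)} {k : ℕ} (hk : k < extremeRank T i) :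
    rankCount T i k = 0 := by
  refine (Set.ncard_eq_zero (Set.toFinite _)).2 (Set.eq_empty_of_forall_notMem fun r hr => ?_)
  have hrk : twoSidedRank T i r = k := hr
  have := extremeRank_le_twoSidedRank T i r
  omega

lemma rankCount_extremeRank_pos (i : Fin (s + 1)) : 0 < rankCount T i (extremeRank T i) :=
  (Set.ncard_pos (Set.toFinite _)).2 (exists_twoSidedRank_eq_extremeRank T i)

/-- Both count vectors vanish below `R_i`, and at `R_i` only `N_i` is nonzero. -/
lemma rankCountLT_of_extremeRank_lt {i j : Fin (s + 1)} (hi : extremeRank T i ≤ (s + 2) / 2)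
    (hij : extremeRank T i < extremeRank T j) : rankCountLT T i j := by
  refine ⟨extremeRank T i, one_le_extremeRank T i, hi, fun k _ hk => ?_, ?_⟩
  · rw [rankCount_eq_zero_of_lt_extremeRank T hk,
      rankCount_eq_zero_of_lt_extremeRank T (hk.trans hij)]
  · rw [rankCount_eq_zero_of_lt_extremeRank T hij]
    exact rankCount_extremeRank_pos T i

end Ranks

theorem conservative_envelope_imp_rankCount_test_general
    {s : ℕ} {ι : Type*} [Fintype ι] [Nonempty ι]
    (T : Fin (s + 1) → ι → ℝ)
    (hnoties : ∀ r : ι, ∀ i j : Fin (s + 1), i ≠ j → T i r ≠ T j r) :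
    {i : Fin (s + 1) | ¬ rankCountLT T 0 i}.ncard ≤
        {i : Fin (s + 1) | extremeRank T i ≤ extremeRank T 0}.ncard ∧
      ∀ m : ℕ, {i : Fin (s + 1) | extremeRank T i ≤ extremeRank T 0}.ncard ≤ m →
        {i : Fin (s + 1) | ¬ rankCountLT T 0 i}.ncard ≤ m := by
  obtain ⟨r⟩ := ‹Nonempty ι›
  have hr : Function.Injective (T · r) := fun i j hij =>
    by_contra fun hne => hnoties r i j hne hij
  have hsub : {i | ¬ rankCountLT T 0 i} ⊆ {i | extremeRank T i ≤ extremeRank T 0} :=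
    fun i hi => not_lt.1 fun hlt =>
      hi (rankCountLT_of_extremeRank_lt T (extremeRank_le_half T hr 0) hlt)
  have hcard := Set.ncard_le_ncard hsub (Set.toFinite _)
  exact ⟨hcard, fun m hm => hcard.trans hm⟩

/-- **The conservative rank envelope test rejects only if the rank count test
rejects.** It holds that `#{i : N_i ≼ N_1} ≤ #{i : R_i ≤ R_1}`, where `N_i ≼ N_1` means
`¬(N_1 ≺ N_i)`. Consequently, for any integer `m`, if `#{i : R_i ≤ R_1} ≤ m` (the
conservative rank envelope test at level `m/(s+1)` rejects), then `#{i : N_i ≼ N_1} ≤ m`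
(the rank count test rejects). -/
theorem conservative_envelope_imp_rankCount_test
    {s : ℕ} (hs : 1 ≤ s) {ι : Type*} [Fintype ι] [Nonempty ι]
    (T : Fin (s + 1) → ι → ℝ)
    (hnoties : ∀ r : ι, ∀ i j : Fin (s + 1), i ≠ j → T i r ≠ T j r) :
    {i : Fin (s + 1) | ¬ rankCountLT T 0 i}.ncard ≤
        {i : Fin (s + 1) | extremeRank T i ≤ extremeRank T 0}.ncard ∧
      ∀ m : ℕ, {i : Fin (s + 1) | extremeRank T i ≤ extremeRank T 0}.ncard ≤ m →
        {i : Fin (s + 1) | ¬ rankCountLT T 0 i}.ncard ≤ m :=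
  conservative_envelope_imp_rankCount_test_general T hnoties
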